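/- For N = 2 variables, the operators M_{1,k} = x_1^k · x_1/(x_1−x_2) Γ_1 + x_2^k · x_2/(x_2−x_1) Γ_2 satisfy the commutation relation M_{1,k} M_{1,k'} = q^{k'−k} M_{1,k'} M_{1,k} for all k, k' ∈ ℤ with |k−k'| ≤ 1. -/

import Mathlib

noncomputable section

open MvPolynomial

/-- The base field `ℚ(q^{1/2})`; `sQ` is the square root of `q`. -/
abbrev Rq : Type := RatFunc ℚ

/-- `q^{1/2}`. -/
def sQ : Rq := RatFunc.X

lemma sq_ne_zero : sQ ≠ 0 := RatFunc.X_ne_zero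

/-- The parameter `q`. -/
def qq : Rq := sQ ^ 2

/-- Polynomials in the variables `y_i = x_i^{1/2}`, `i = 1, …, N`. -/
abbrev Pol (N : ℕ) := MvPolynomial (Fin N) Rq

/-- The field of rational functions in `x_1^{1/2}, …, x_N^{1/2}` over `ℚ(q^{1/2})`. -/
abbrev K (N : ℕ) := FractionRing (Pol N)

/-- The substitution `y_j ↦ q^{v_j/2} y_j` on polynomials. -/
def shiftHom (N : ℕ) (v : Fin N → ℤ) : Pol N →ₐ[Rq] Pol N :=
  aeval fun j => C (sQ ^ v j) * X j

/-- The substitution `y_j ↦ q^{v_j/2} y_j` as an algebra automorphism of polynomials. -/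
def shiftEquiv (N : ℕ) (v : Fin N → ℤ) : Pol N ≃ₐ[Rq] Pol N :=
  AlgEquiv.ofAlgHom (shiftHom N v) (shiftHom N (-v))
    (by
      apply MvPolynomial.algHom_ext
      intro j
      simp [shiftHom]
      rw [← mul_assoc, ← C_mul, inv_mul_cancel₀ (zpow_ne_zero _ sq_ne_zero), C_1, one_mul])
    (by
      apply MvPolynomial.algHom_ext
      intro j
      simp [shiftHom]
      rw [← mul_assoc, ← C_mul, mul_inv_cancel₀ (zpow_ne_zero _ sq_ne_zero), C_1, one_mul])

/-- The `q`-shift operator `∏_i Γ_i^{v_i/2}` : the field automorphism of `K N` induced by the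
substitution `y_j = x_j^{1/2} ↦ q^{v_j / 2} y_j`, i.e. `x_j ↦ q^{v_j} x_j`.  In particular
`Γ N (2 • v)` is the honest shift `x_j ↦ q^{v_j} x_j` and half-units allow `Γ_j^{1/2}`. -/
def Γ (N : ℕ) (v : Fin N → ℤ) : K N ≃+* K N :=
  IsFractionRing.ringEquivOfRingEquiv (shiftEquiv N v).toRingEquiv

/-- The square root `y_i = x_i^{1/2}` of the `i`-th variable, inside `K N`. -/
def y (N : ℕ) (i : Fin N) : K N := algebraMap (Pol N) (K N) (X i)

/-- The `i`-th variable `x_i` of `K N`. -/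
def x (N : ℕ) (i : Fin N) : K N := y N i ^ 2

/-- The parameter `q` inside `K N`. -/
def qK (N : ℕ) : K N := algebraMap (Pol N) (K N) (C qq)

end
noncomputable section

/-- The variables of type `A_{N-1}` Macdonald theory: `x_i`, realized as the generators of `K N`. -/
def xA (N : ℕ) (i : Fin N) : K N := y N i

/-- `∏_i Γ_i^{v_i}`, where `Γ_i` is the `q`-shift operator `x_i ↦ q x_i`. -/
def ΓA (N : ℕ) (v : Fin N → ℤ) : K N ≃+* K N := Γ N (2 • v)

/-- The type `A` difference operators
`M_{a,k} = Σ_{I ⊆ [1,N], |I|=a} (Π_{i∈I} x_i)^k Π_{i∈I,j∉I} x_i/(x_i−x_j) Π_{i∈I} Γ_i`. -/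
def MA (N : ℕ) (a : ℕ) (k : ℤ) : K N → K N := fun f =>
  ∑ I ∈ Finset.powersetCard a (Finset.univ : Finset (Fin N)),
    (∏ i ∈ I, xA N i) ^ k *
      ((∏ i ∈ I, ∏ j ∈ Iᶜ, xA N i / (xA N i - xA N j)) *
        ΓA N (fun i => if i ∈ I then 1 else 0) f)

/-- `M_{1,k} = x_1^k·x_1/(x_1−x_2)·Γ_1 + x_2^k·x_2/(x_2−x_1)·Γ_2` for `N = 2`. -/
def M1 (k : ℤ) : K 2 → K 2 := fun f =>
  xA 2 0 ^ k * (xA 2 0 / (xA 2 0 - xA 2 1)) * ΓA 2 ![1, 0] f +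
    xA 2 1 ^ k * (xA 2 1 / (xA 2 1 - xA 2 0)) * ΓA 2 ![0, 1] f

/-! Both sides are combinations of `Γ_1²`, `Γ_1 Γ_2`, `Γ_2²` (the shifts commute). Since
`Γ_i x_i^k = q^k x_i^k`, the `Γ_i²` coefficients agree up to `q^{k'-k}` for all `k, k'`. The mixed
coefficient is `(x_1 x_2)^k` times a rational function of `x_1, x_2, q` independent of `k`, and for
`k' = k + 1` the required identity between these rational functions can be checked directly.
The case `k = k'` is trivial and `k = k' + 1` follows from `k' = k + 1` by inverting `q`. -/

section TwoShiftOperator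

variable {F : Type*} [Field F] {u v Q : F}

lemma zpow_mul_mul_zpow_succ (hQ : Q ≠ 0) (hu : u ≠ 0) (k : ℤ) :
    u ^ k * (Q * u) ^ (k + 1) = Q * (u ^ (k + 1) * (Q * u) ^ k) := by
  rw [zpow_add_one₀ hu, zpow_add_one₀ (mul_ne_zero hQ hu)]
  ring

lemma mixed_coeff_succ (hu : u ≠ 0) (hv : v ≠ 0) (huv : u ≠ v)
    (hQuv : Q * u ≠ v) (hQvu : Q * v ≠ u) (k : ℤ) :
    u ^ k * (u / (u - v)) * (v ^ (k + 1) * (v / (v - Q * u))) +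
        v ^ k * (v / (v - u)) * (u ^ (k + 1) * (u / (u - Q * v))) =
      Q * (u ^ (k + 1) * (u / (u - v)) * (v ^ k * (v / (v - Q * u))) +
        v ^ (k + 1) * (v / (v - u)) * (u ^ k * (u / (u - Q * v)))) := by
  have h₁ : u - v ≠ 0 := sub_ne_zero.mpr huv
  have h₂ : v - u ≠ 0 := sub_ne_zero.mpr huv.symm
  have h₃ : v - u * Q ≠ 0 := by rwa [mul_comm, sub_ne_zero, ne_comm]
  have h₄ : u - v * Q ≠ 0 := by rwa [mul_comm, sub_ne_zero, ne_comm]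
  rw [zpow_add_one₀ hu, zpow_add_one₀ hv]
  field_simp
  ring

def twoShiftOp (σ τ : F ≃+* F) (u v : F) (k : ℤ) (f : F) : F :=
  u ^ k * (u / (u - v)) * σ f + v ^ k * (v / (v - u)) * τ f

variable {σ τ : F ≃+* F}

theorem twoShiftOp_comp_succ (hστ : ∀ f, σ (τ f) = τ (σ f))
    (hσu : σ u = Q * u) (hσv : σ v = v) (hτu : τ u = u) (hτv : τ v = Q * v)
    (hQ : Q ≠ 0) (hu : u ≠ 0) (hv : v ≠ 0) (huv : u ≠ v)
    (hQuv : Q * u ≠ v) (hQvu : Q * v ≠ u) (k : ℤ) :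
    twoShiftOp σ τ u v k ∘ twoShiftOp σ τ u v (k + 1) =
      Q • (twoShiftOp σ τ u v (k + 1) ∘ twoShiftOp σ τ u v k) := by
  funext f
  simp only [twoShiftOp, Function.comp_apply, Pi.smul_apply, smul_eq_mul, map_add, map_mul,
    map_div₀, map_sub, map_zpow₀, hσu, hσv, hτu, hτv, hστ]
  linear_combination
    u / (u - v) * (Q * u / (Q * u - v)) * σ (σ f) * zpow_mul_mul_zpow_succ hQ hu k +
    τ (σ f) * mixed_coeff_succ hu hv huv hQuv hQvu k +
    v / (v - u) * (Q * v / (Q * v - u)) * τ (τ f) * zpow_mul_mul_zpow_succ hQ hv k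

end TwoShiftOperator

section QShift

open MvPolynomial

variable {N : ℕ}

lemma shiftHom_comp_shiftHom (v w : Fin N → ℤ) :
    (shiftHom N v).comp (shiftHom N w) = shiftHom N (v + w) := by
  refine MvPolynomial.algHom_ext fun j => ?_
  simp only [AlgHom.comp_apply, shiftHom, aeval_X, map_mul, aeval_C, algebraMap_eq, Pi.add_apply,
    zpow_add₀ sq_ne_zero]
  ring

lemma Γ_algebraMap (v : Fin N → ℤ) (p : Pol N) :
    Γ N v (algebraMap (Pol N) (K N) p) = algebraMap (Pol N) (K N) (shiftHom N v p) :=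
  IsFractionRing.ringEquivOfRingEquiv_algebraMap _ p

lemma Γ_Γ (v w : Fin N → ℤ) (f : K N) : Γ N v (Γ N w f) = Γ N (v + w) f := by
  have : ((Γ N v).toRingHom.comp (Γ N w).toRingHom) = (Γ N (v + w)).toRingHom :=
    IsFractionRing.ringHom_ext (A := Pol N) fun p => by
      simp [Γ_algebraMap, ← shiftHom_comp_shiftHom v w]
  exact RingHom.congr_fun this f

lemma ΓA_comm (v w : Fin N → ℤ) (f : K N) : ΓA N v (ΓA N w f) = ΓA N w (ΓA N v f) := by
  simp only [ΓA, Γ_Γ, add_comm]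

lemma ΓA_xA (v : Fin N → ℤ) (i : Fin N) : ΓA N v (xA N i) = qK N ^ v i * xA N i := by
  have hC : algebraMap (Pol N) (K N) (C (sQ ^ (2 • v) i)) = qK N ^ v i := by
    rw [Pi.smul_apply, nsmul_eq_mul, Nat.cast_ofNat, zpow_mul]
    exact map_zpow₀ ((algebraMap (Pol N) (K N)).comp C) qq (v i)
  rw [ΓA, xA, y, Γ_algebraMap, shiftHom, aeval_X, map_mul, hC]

lemma qK_ne_zero : qK N ≠ 0 :=
  (map_ne_zero_iff _ (IsFractionRing.injective _ _)).mpr (by simp [qq, sq_ne_zero])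

lemma xA_ne_zero (i : Fin N) : xA N i ≠ 0 :=
  (map_ne_zero_iff _ (IsFractionRing.injective _ _)).mpr (X_ne_zero i)

lemma xA_injective : Function.Injective (xA N) :=
  (IsFractionRing.injective (Pol N) (K N)).comp (X_injective (R := Rq))

lemma qK_mul_xA_ne {i j : Fin N} (hij : i ≠ j) : qK N * xA N i ≠ xA N j := by
  have hpol : C qq * X i ≠ (X j : Pol N) := fun h => by
    simpa [coeff_X, Finsupp.single_eq_single_iff, hij] using
      congrArg (coeff (Finsupp.single j 1)) h
  rw [qK, xA, xA, y, y, ← map_mul]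
  exact (IsFractionRing.injective (Pol N) (K N)).ne hpol

end QShift

lemma M1_comp_succ (k : ℤ) : M1 k ∘ M1 (k + 1) = qK 2 • (M1 (k + 1) ∘ M1 k) :=
  twoShiftOp_comp_succ (ΓA_comm _ _) (by simp [ΓA_xA]) (by simp [ΓA_xA]) (by simp [ΓA_xA])
    (by simp [ΓA_xA]) qK_ne_zero (xA_ne_zero 0) (xA_ne_zero 1) (xA_injective.ne (by decide))
    (qK_mul_xA_ne (by decide)) (qK_mul_xA_ne (by decide)) k

/-- for `N = 2`, `M_{1,k} M_{1,k'} = q^{k'−k} M_{1,k'} M_{1,k}` whenever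
`|k − k'| ≤ 1`. -/
theorem stmt6 (k k' : ℤ) (h : |k - k'| ≤ 1) :
    M1 k ∘ M1 k' = (qK 2 ^ (k' - k)) • (M1 k' ∘ M1 k) := by
  obtain rfl | rfl | rfl : k' = k ∨ k' = k + 1 ∨ k = k' + 1 := by
    rcases abs_le.mp h with ⟨hlo, hhi⟩
    omega
  · rw [sub_self, zpow_zero, one_smul]
  · simpa using M1_comp_succ k
  · rw [show k' - (k' + 1) = -1 by ring, zpow_neg_one, eq_inv_smul_iff₀ qK_ne_zero]
    exact (M1_comp_succ k').symm
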